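/- arXiv:1605.01420 — 2 statements merged into one kernel-verified Lean document; each statement's English description precedes it below -/
import Mathlib

section
/- The composition V U_X U_Z, where U_Z copies the Z basis, U_X copies the X (Fourier) basis, and V = Σ_x |x⟩⟨x|_{A''} ⊗ (Z^x)_{A'} is a controlled-phase gate, equals the isometry W mapping |ψ⟩_A to (1/√d) Σ_{x=0}^{d−1} |x⟩_{A''} ⊗ |x̃⟩_A ⊗ |ψ⟩_{A'}; in particular, applying W to any unit vector produces a maximally entangled state on A A''. -/
open Matrix Kronecker Complex BigOperators
open scoped ComplexOrder Classical

noncomputable section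

/-- primitive d-th root of unity -/
def omg (d : ℕ) : ℂ := Complex.exp (2 * Real.pi * Complex.I / d)

/-- standard basis vector |z⟩ -/
def ketZ (d : ℕ) (z : Fin d) : Fin d → ℂ := fun i => if i = z then 1 else 0

/-- Fourier basis vector |x̃⟩ = (1/√d) Σ_z ω^{xz} |z⟩ -/
def ketX (d : ℕ) (x : Fin d) : Fin d → ℂ :=
  fun z => ((1 / Real.sqrt d : ℝ) : ℂ) * omg d ^ ((x : ℕ) * (z : ℕ))

/-- projector |z⟩⟨z| -/
def projZ (d : ℕ) (z : Fin d) : Matrix (Fin d) (Fin d) ℂ :=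
  Matrix.vecMulVec (ketZ d z) (star (ketZ d z))

/-- projector |x̃⟩⟨x̃| -/
def projX (d : ℕ) (x : Fin d) : Matrix (Fin d) (Fin d) ℂ :=
  Matrix.vecMulVec (ketX d x) (star (ketX d x))

/-- positive semidefinite square root (0 if not PSD) -/
def msqrt {n : Type*} [Fintype n] [DecidableEq n] (M : Matrix n n ℂ) : Matrix n n ℂ :=
  if h : M.PosSemidef then h.1.eigenvectorUnitary.1 * diagonal ((↑) ∘ Real.sqrt ∘ h.1.eigenvalues) *
    (star h.1.eigenvectorUnitary : Matrix n n ℂ) else 0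

/-- trace norm ‖M‖₁ = Tr √(MᴴM) -/
def trNorm {n : Type*} [Fintype n] [DecidableEq n] (M : Matrix n n ℂ) : ℝ :=
  (msqrt (Mᴴ * M)).trace.re

/-- fidelity F(ρ,σ) = ‖√ρ√σ‖₁ -/
def Fid {n : Type*} [Fintype n] [DecidableEq n] (ρ σ : Matrix n n ℂ) : ℝ :=
  trNorm (msqrt ρ * msqrt σ)

/-- a POVM with d outcomes -/
def IsPOVM {n : Type*} [Fintype n] [DecidableEq n] {d : ℕ} (Λ : Fin d → Matrix n n ℂ) : Prop :=
  (∀ z, (Λ z).PosSemidef) ∧ ∑ z, Λ z = 1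

/-- optimal guessing probability of the measurement with rank-one elements P z on A,
given the B part of the bipartite state ψ -/
def Pguess {d : ℕ} {β : Type*} [Fintype β] [DecidableEq β]
    (P : Fin d → Matrix (Fin d) (Fin d) ℂ) (ψ : Matrix (Fin d × β) (Fin d × β) ℂ) : ℝ :=
  sSup { r | ∃ Λ : Fin d → Matrix β β ℂ, IsPOVM Λ ∧
    r = (Matrix.trace ((∑ z, P z ⊗ₖ Λ z) * ψ)).re }

/-- the coherent copy isometry U_Z : |z⟩_A ↦ (|z⟩_A, |z⟩_{A'}) -/
def UZmat (d : ℕ) : Matrix (Fin d × Fin d) (Fin d) ℂ :=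
  fun p z => if p.1 = z ∧ p.2 = z then 1 else 0

/-- U_X ⊗ 1_{A'} : copies the Fourier basis of A to A''.  Index order (a'', a, a'). -/
def UXext (d : ℕ) : Matrix (Fin d × Fin d × Fin d) (Fin d × Fin d) ℂ :=
  fun q p => (if q.2.2 = p.2 then 1 else 0) * (ketX d q.1 q.2.1 * (starRingEnd ℂ) (ketX d q.1 p.1))

/-- controlled-phase gate V = Σ_x |x⟩⟨x|_{A''} ⊗ Z^x_{A'} (diagonal in (a'', a, a')) -/
def Vcp (d : ℕ) : Matrix (Fin d × Fin d × Fin d) (Fin d × Fin d × Fin d) ℂ :=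
  fun q q' => if q = q' then omg d ^ ((q.1 : ℕ) * (q.2.2 : ℕ)) else 0

/-- the target isometry W : |ψ⟩_A ↦ (1/√d) Σ_x |x⟩_{A''} ⊗ |x̃⟩_A ⊗ |ψ⟩_{A'} -/
def Wmat (d : ℕ) : Matrix (Fin d × Fin d × Fin d) (Fin d) ℂ :=
  fun q z => if q.2.2 = z then ((1 / Real.sqrt d : ℝ) : ℂ) * ketX d q.1 q.2.1 else 0

/-- the maximally entangled vector (1/√d) Σ_x |x⟩_{A''} ⊗ |x̃⟩_A on A''A -/
def PhiX (d : ℕ) : Fin d × Fin d → ℂ :=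
  fun p => ((1 / Real.sqrt d : ℝ) : ℂ) * ketX d p.1 p.2

/- The Fourier copy leaves the phase ω^{-xz} from ⟨x̃|z⟩ on the branch a' = z; the controlled
phase ω^{xz} applied by V cancels it, leaving the amplitude ⟨a|x̃⟩/√d, independent of z. -/

theorem norm_omg (d : ℕ) : ‖omg d‖ = 1 := by
  rw [omg, Complex.norm_exp]
  simp [Complex.div_re]

theorem omg_pow_mul_conj (d n : ℕ) : omg d ^ n * starRingEnd ℂ (omg d ^ n) = 1 := by
  rw [Complex.mul_conj, Complex.normSq_eq_norm_sq, norm_pow, norm_omg]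
  simp

theorem omg_pow_mul_conj_ketX (d : ℕ) (x z : Fin d) :
    omg d ^ ((x : ℕ) * (z : ℕ)) * starRingEnd ℂ (ketX d x z) = ((1 / Real.sqrt d : ℝ) : ℂ) := by
  rw [ketX, map_mul, Complex.conj_ofReal, mul_left_comm, omg_pow_mul_conj, mul_one]

theorem Vcp_eq_diagonal (d : ℕ) :
    Vcp d = diagonal fun q => omg d ^ ((q.1 : ℕ) * (q.2.2 : ℕ)) := by
  ext q q'
  simp only [Vcp, diagonal_apply]

theorem mul_UZmat_apply {d : ℕ} {ι : Type*} (M : Matrix ι (Fin d × Fin d) ℂ) (i : ι) (z : Fin d) :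
    (M * UZmat d) i z = M i (z, z) := by
  rw [mul_apply, Finset.sum_eq_single (z, z)]
  · simp [UZmat]
  · rintro p - hp
    have : ¬(p.1 = z ∧ p.2 = z) := fun h => hp (Prod.ext h.1 h.2)
    simp [UZmat, this]
  · simp

theorem VUXUZ_eq_Wmat (d : ℕ) : Vcp d * UXext d * UZmat d = Wmat d := by
  ext q z
  rw [mul_UZmat_apply, Vcp_eq_diagonal, diagonal_mul]
  by_cases h : q.2.2 = z
  · subst h
    simp only [UXext, Wmat, if_true, one_mul]
    rw [mul_left_comm, omg_pow_mul_conj_ketX, mul_comm]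
  · simp [UXext, Wmat, h]

theorem Wmat_mulVec (d : ℕ) (ψ : Fin d → ℂ) :
    Wmat d *ᵥ ψ = fun q => PhiX d (q.1, q.2.1) * ψ q.2.2 := by
  funext q
  rw [mulVec, dotProduct, Finset.sum_eq_single q.2.2]
  · simp [Wmat, PhiX]
  · rintro z - hz
    simp [Wmat, Ne.symm hz]
  · simp

theorem VUXUZ_eq_W_general (d : ℕ) :
    Vcp d * UXext d * UZmat d = Wmat d ∧
    ∀ ψ : Fin d → ℂ, (∑ z, Complex.normSq (ψ z)) = 1 →
      (Wmat d).mulVec ψ = fun q => PhiX d (q.1, q.2.1) * ψ q.2.2 :=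
  ⟨VUXUZ_eq_Wmat d, fun ψ _ => Wmat_mulVec d ψ⟩

/-- V U_X U_Z = W, and applying W to any unit vector ψ produces the
maximally entangled state on A A'' in product with ψ on A'. -/
theorem VUXUZ_eq_W (d : ℕ) [NeZero d] :
    Vcp d * UXext d * UZmat d = Wmat d ∧
    ∀ ψ : Fin d → ℂ, (∑ z, Complex.normSq (ψ z)) = 1 →
      (Wmat d).mulVec ψ = fun q => PhiX d (q.1, q.2.1) * ψ q.2.2 :=
  VUXUZ_eq_W_general d
end
end

section
/- The arccosine of fidelity satisfies the triangle inequality for pure states: for unit vectors |φ⟩, |χ⟩, |ξ⟩ in a Hilbert space, arccos|⟨φ|ξ⟩| ≤ arccos|⟨φ|χ⟩| + arccos|⟨χ|ξ⟩|. -/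
open scoped InnerProductSpace

/-!
Up to a phase, the Fubini–Study distance `arccos (‖⟪x, y⟫‖ / (‖x‖ * ‖y‖))` is the real angle
between `x` and `y` in the underlying real inner product space (whose inner product is
`re ⟪x, y⟫`): it is at most that angle, with equality once `⟪x, y⟫` is real and nonnegative.
Multiplying `y` and then `z` by unimodular scalars that make `⟪x, y⟫` and `⟪y, z⟫` real and
nonnegative changes none of the three distances, so the triangle inequality for real angles
gives the one for Fubini–Study distances.
-/

open InnerProductGeometry RCLike

section FubiniStudy

variable (𝕜 : Type*) {E : Type*} [RCLike 𝕜] [NormedAddCommGroup E] [InnerProductSpace 𝕜 E]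

noncomputable def fubiniStudyDist (x y : E) : ℝ :=
  Real.arccos (‖⟪x, y⟫_𝕜‖ / (‖x‖ * ‖y‖))

variable {𝕜}

theorem fubiniStudyDist_smul_left {u : 𝕜} (hu : ‖u‖ = 1) (x y : E) :
    fubiniStudyDist 𝕜 (u • x) y = fubiniStudyDist 𝕜 x y := by
  simp [fubiniStudyDist, inner_smul_left, norm_smul, hu]

theorem fubiniStudyDist_smul_right {u : 𝕜} (hu : ‖u‖ = 1) (x y : E) :
    fubiniStudyDist 𝕜 x (u • y) = fubiniStudyDist 𝕜 x y := by
  simp [fubiniStudyDist, inner_smul_right, norm_smul, hu]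

theorem exists_norm_eq_one_inner_smul_right_eq_norm (x y : E) :
    ∃ u : 𝕜, ‖u‖ = 1 ∧ ⟪x, u • y⟫_𝕜 = ‖⟪x, u • y⟫_𝕜‖ := by
  obtain ⟨u, hu, h⟩ := exists_norm_eq_mul_self ⟪x, y⟫_𝕜
  exact ⟨u, hu, by rw [inner_smul_right, ← h]; simp⟩

theorem fubiniStudyDist_le_arccos_re_inner (x y : E) :
    fubiniStudyDist 𝕜 x y ≤ Real.arccos (re ⟪x, y⟫_𝕜 / (‖x‖ * ‖y‖)) :=
  Real.arccos_le_arccos <| by gcongr; exact re_le_norm _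

theorem fubiniStudyDist_eq_arccos_re_inner {x y : E} (h : ⟪x, y⟫_𝕜 = ‖⟪x, y⟫_𝕜‖) :
    fubiniStudyDist 𝕜 x y = Real.arccos (re ⟪x, y⟫_𝕜 / (‖x‖ * ‖y‖)) := by
  rw [h, ofReal_re]; rfl

theorem fubiniStudyDist_triangle (x y z : E) :
    fubiniStudyDist 𝕜 x z ≤ fubiniStudyDist 𝕜 x y + fubiniStudyDist 𝕜 y z := by
  let := InnerProductSpace.rclikeToReal 𝕜 E
  obtain ⟨u, hu, hxy⟩ := exists_norm_eq_one_inner_smul_right_eq_norm (𝕜 := 𝕜) x y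
  obtain ⟨v, hv, hyz⟩ := exists_norm_eq_one_inner_smul_right_eq_norm (𝕜 := 𝕜) (u • y) z
  calc fubiniStudyDist 𝕜 x z = fubiniStudyDist 𝕜 x (v • z) :=
        (fubiniStudyDist_smul_right hv x z).symm
    _ ≤ angle x (v • z) := fubiniStudyDist_le_arccos_re_inner x (v • z)
    _ ≤ angle x (u • y) + angle (u • y) (v • z) := angle_le_angle_add_angle _ _ _
    _ = fubiniStudyDist 𝕜 x (u • y) + fubiniStudyDist 𝕜 (u • y) (v • z) := by
      rw [fubiniStudyDist_eq_arccos_re_inner hxy, fubiniStudyDist_eq_arccos_re_inner hyz]; rfl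
    _ = fubiniStudyDist 𝕜 x y + fubiniStudyDist 𝕜 y z := by
      rw [fubiniStudyDist_smul_right hu, fubiniStudyDist_smul_right hv,
        fubiniStudyDist_smul_left hu]

end FubiniStudy

/-- the arccosine of the overlap satisfies the triangle inequality
for unit vectors. -/
theorem arccos_fidelity_triangle {n : ℕ} (φ χ ξ : EuclideanSpace ℂ (Fin n))
    (hφ : ‖φ‖ = 1) (hχ : ‖χ‖ = 1) (hξ : ‖ξ‖ = 1) :
    Real.arccos ‖⟪φ, ξ⟫_ℂ‖ ≤ Real.arccos ‖⟪φ, χ⟫_ℂ‖ + Real.arccos ‖⟪χ, ξ⟫_ℂ‖ := by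
  simpa [fubiniStudyDist, hφ, hχ, hξ] using fubiniStudyDist_triangle (𝕜 := ℂ) φ χ ξ
end
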